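/- arXiv:2212.13081 — 2 statements merged into one kernel-verified Lean document; each statement's English description precedes it below -/
import Mathlib

section
/- In the free group F(x₁, x₂), let U_α = ⟨x₁, x₂x₁⁻¹x₂⁻¹⟩. For any a ∈ F(x₁,x₂), the intersection aU_αa⁻¹ ∩ U_α is nontrivial if and only if a = u₁·x₂^ε·u₂ for some u₁, u₂ ∈ U_α and ε ∈ {-1, 0, 1}. -/
open FreeGroup

noncomputable def x₁ : FreeGroup (Fin 2) := FreeGroup.of 0
noncomputable def x₂ : FreeGroup (Fin 2) := FreeGroup.of 1

noncomputable def Uα : Subgroup (FreeGroup (Fin 2)) :=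
  Subgroup.closure {x₁, x₂ * x₁⁻¹ * x₂⁻¹}

/-!
The Stallings graph of `Uα` has two vertices `0` and `1`, an `x₁`-loop at each of them and one
`x₂`-edge from `0` to `1`. Hence a reduced word lies in `Uα` iff its levels (the `x₂`-exponent sums
of its prefixes) stay in `{0, 1}` and end at `0`, and any word whose levels stay in `{0, 1}`
represents an element of `Uα x₂ ^ ε`, where `ε` is its final level.

If `a c a⁻¹ ∈ Uα` for some `c ≠ 1` in `Uα`, induct on the length of `a`. Both sides of the
equivalence are invariant under `a ↦ u * a` for `u ∈ Uα`, under `a ↦ a⁻¹`, and under the involutive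
automorphism `x₁ ↦ x₂ x₁ x₂⁻¹, x₂ ↦ x₂⁻¹`, which swaps the two vertices of the graph and so
preserves `Uα`. A leading `x₁^±1` is absorbed into `Uα`, and the automorphism shortens `x₂ w x₂⁻¹`
to the word `w` with `x₂` inverted. In the remaining case the reduced word of `a` ends with `x₂` (or,
up to inversion, starts with `x₂⁻¹`). Since a word of `Uα` can neither start with `x₂⁻¹` nor end
with `x₂`, nothing cancels in `a c a⁻¹`. The word of `a` is therefore a prefix of a word of `Uα`, so
its levels stay in `{0, 1}`.
-/

namespace FreeGroup

variable {α : Type*}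

lemma mk_singleton (i : α) (b : Bool) : mk [(i, b)] = of i ^ (if b then 1 else -1 : ℤ) := by
  cases b
  · simp [of, inv_mk, FreeGroup.invRev]
  · simp [of]

lemma isReduced_append {L M : List (α × Bool)} (hL : IsReduced L) (hM : IsReduced M)
    (h : ∀ x ∈ L.getLast?, ∀ y ∈ M.head?, y ≠ (x.1, !x.2)) : IsReduced (L ++ M) := by
  refine List.IsChain.append hL hM fun x hx y hy hxy => ?_
  have := h x hx y hy
  obtain ⟨i, b⟩ := x
  obtain ⟨j, c⟩ := y
  cases b <;> cases c <;> simp_all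

variable [DecidableEq α]

lemma getLast?_toWord_of_head?_toWord_inv {a : FreeGroup α} {i : α} {b : Bool}
    (h : a⁻¹.toWord.head? = some (i, b)) : a.toWord.getLast? = some (i, !b) := by
  obtain ⟨t, ht⟩ := List.head?_eq_some_iff.1 h
  rw [← inv_inv a, toWord_inv a⁻¹, ht, invRev_cons]
  simp [FreeGroup.invRev]

theorem norm_lift_le {β : Type*} [DecidableEq β] {f : α → FreeGroup β}
    (hf : ∀ a, (f a).norm ≤ 1) (x : FreeGroup α) : (lift f x).norm ≤ x.norm := by
  change _ ≤ x.toWord.length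
  suffices h : ∀ L : List (α × Bool), (lift f (mk L)).norm ≤ L.length by
    simpa only [mk_toWord] using h x.toWord
  intro L
  induction L with
  | nil => simp [← one_eq_mk]
  | cons y L ih =>
    rw [← List.singleton_append, ← mul_mk, _root_.map_mul, List.length_append]
    refine (norm_mul_le _ _).trans (add_le_add ?_ ih)
    obtain ⟨a, b⟩ := y
    cases b <;> simp [lift_mk, norm_inv_eq, hf]

end FreeGroup

namespace Uα

def letterHeight (x : Fin 2 × Bool) : ℤ := if x.1 = 1 then (if x.2 then 1 else -1) else 0

def height (L : List (Fin 2 × Bool)) : ℤ := (L.map letterHeight).sum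

def ReadsFrom : ℤ → List (Fin 2 × Bool) → Prop
  | s, [] => s ∈ Set.Icc 0 1
  | s, x :: L => s ∈ Set.Icc 0 1 ∧ ReadsFrom (s + letterHeight x) L

def IsLoop (L : List (Fin 2 × Bool)) : Prop := ReadsFrom 0 L ∧ height L = 0

section Words

variable {s : ℤ} {L M : List (Fin 2 × Bool)}

lemma letterHeight_not (x : Fin 2 × Bool) : letterHeight (x.1, !x.2) = -letterHeight x := by
  rcases x with ⟨i, b⟩; fin_cases i <;> cases b <;> simp [letterHeight]

@[simp] lemma height_nil : height [] = 0 := rfl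

@[simp] lemma height_cons (x : Fin 2 × Bool) (L : List (Fin 2 × Bool)) :
    height (x :: L) = letterHeight x + height L := by
  simp [height]

@[simp] lemma height_append (L M : List (Fin 2 × Bool)) :
    height (L ++ M) = height L + height M := by
  simp [height]

lemma height_invRev (L : List (Fin 2 × Bool)) : height (invRev L) = -height L := by
  induction L with
  | nil => rfl
  | cons x L ih =>
    rw [invRev_cons, height_append, ih]
    simp [FreeGroup.invRev, letterHeight_not]

lemma ReadsFrom.mem_Icc (h : ReadsFrom s L) : s ∈ Set.Icc 0 1 := by
  cases L with
  | nil => exact h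
  | cons x L => exact h.1

lemma readsFrom_append : ReadsFrom s (L ++ M) ↔ ReadsFrom s L ∧ ReadsFrom (s + height L) M := by
  induction L generalizing s with
  | nil => exact ⟨fun h => ⟨h.mem_Icc, by simpa using h⟩, fun h => by simpa using h.2⟩
  | cons x L ih => simp [ReadsFrom, ih, add_assoc, and_assoc]

lemma ReadsFrom.add_height_mem_Icc (h : ReadsFrom s L) : s + height L ∈ Set.Icc 0 1 :=
  (readsFrom_append.1 (by simpa using h : ReadsFrom s (L ++ []))).2.mem_Icc

lemma ReadsFrom.invRev (h : ReadsFrom s L) : ReadsFrom (s + height L) (invRev L) := by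
  induction L generalizing s with
  | nil => simpa using h
  | cons x L ih =>
    rw [invRev_cons, readsFrom_append]
    refine ⟨by simpa [add_assoc] using ih h.2, ?_⟩
    have hx : FreeGroup.invRev [x] = [(x.1, !x.2)] := rfl
    simp only [hx, height_cons, height_invRev, ReadsFrom, letterHeight_not]
    ring_nf
    exact ⟨h.2.mem_Icc, h.1⟩

lemma height_eq_of_red_step (h : Red.Step L M) : height M = height L := by
  rcases h with @⟨A, B, x, b⟩
  simp [letterHeight_not (x, b)]

lemma ReadsFrom.of_red_step (h : Red.Step L M) (hL : ReadsFrom s L) : ReadsFrom s M := by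
  rcases h with @⟨A, B, x, b⟩
  rw [readsFrom_append] at hL ⊢
  refine ⟨hL.1, ?_⟩
  simpa [ReadsFrom, letterHeight_not (x, b)] using hL.2.2.2

lemma IsLoop.of_red (h : Red L M) (hL : IsLoop L) : IsLoop M := by
  induction h with
  | refl => exact hL
  | tail _ hstep ih => exact ⟨ih.1.of_red_step hstep, (height_eq_of_red_step hstep).trans ih.2⟩

lemma IsLoop.append (hL : IsLoop L) (hM : IsLoop M) : IsLoop (L ++ M) :=
  ⟨readsFrom_append.2 ⟨hL.1, by simpa [hL.2] using hM.1⟩, by simp [hL.2, hM.2]⟩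

lemma IsLoop.invRev (hL : IsLoop L) : IsLoop (invRev L) :=
  ⟨by simpa [hL.2] using hL.1.invRev, by simp [height_invRev, hL.2]⟩

lemma IsLoop.head?_ne (h : IsLoop L) : L.head? ≠ some (1, false) := by
  intro hL
  obtain ⟨t, rfl⟩ := List.head?_eq_some_iff.1 hL
  simpa [ReadsFrom, letterHeight] using h.1.2.mem_Icc

lemma IsLoop.getLast?_ne (h : IsLoop L) : L.getLast? ≠ some (1, true) := by
  intro hL
  obtain ⟨t, rfl⟩ := List.getLast?_eq_some_iff.1 hL
  have hreads := (readsFrom_append.1 h.1).2.mem_Icc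
  have hheight := h.2
  simp [letterHeight] at hreads hheight
  omega

end Words

lemma x₁_mem : x₁ ∈ Uα := Subgroup.subset_closure (by simp)

lemma x₂_mul_x₁_inv_mul_x₂_inv_mem : x₂ * x₁⁻¹ * x₂⁻¹ ∈ Uα := Subgroup.subset_closure (by simp)

lemma isLoop_toWord_of_mem {g : FreeGroup (Fin 2)} (hg : g ∈ Uα) : IsLoop g.toWord := by
  induction hg using Subgroup.closure_induction with
  | mem g hg =>
    rcases hg with rfl | rfl
    · simp [x₁, IsLoop, ReadsFrom, height, letterHeight]
    · have : (x₂ * x₁⁻¹ * x₂⁻¹).toWord = [(1, true), (0, false), (1, false)] := by decide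
      simp [this, IsLoop, ReadsFrom, height, letterHeight]
  | one => simp [IsLoop, ReadsFrom]
  | mul g h _ _ hg hh => rw [toWord_mul]; exact (hg.append hh).of_red reduce.red
  | inv g _ hg => rw [toWord_inv]; exact hg.invRev

lemma x₂_zpow_mul_x₁_zpow_mul_x₂_zpow_mem {s : ℤ} (hs : s ∈ Set.Icc 0 1) (n : ℤ) :
    x₂ ^ s * x₁ ^ n * x₂ ^ (-s) ∈ Uα := by
  obtain rfl | rfl : s = 0 ∨ s = 1 := by simp only [Set.mem_Icc] at hs; omega
  · simpa using zpow_mem x₁_mem n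
  · have h : x₂ * x₁ ^ n * x₂⁻¹ = (x₂ * x₁⁻¹ * x₂⁻¹) ^ (-n) := by
      rw [conj_zpow, inv_zpow', neg_neg]
    simpa [h] using zpow_mem x₂_mul_x₁_inv_mul_x₂_inv_mem (-n)

lemma x₂_mul_x₁_mul_x₂_inv_mem : x₂ * x₁ * x₂⁻¹ ∈ Uα := by
  simpa using x₂_zpow_mul_x₁_zpow_mul_x₂_zpow_mem (s := 1) (by simp) 1

lemma x₂_zpow_mul_mk_singleton_mul_x₂_zpow_mem {s : ℤ} (hs : s ∈ Set.Icc 0 1)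
    (x : Fin 2 × Bool) : x₂ ^ s * mk [x] * x₂ ^ (-(s + letterHeight x)) ∈ Uα := by
  obtain ⟨i, b⟩ := x
  rw [mk_singleton]
  obtain rfl | rfl : i = 0 ∨ i = 1 := by omega
  · rw [show letterHeight (0, b) = 0 from rfl, add_zero]
    exact x₂_zpow_mul_x₁_zpow_mul_x₂_zpow_mem hs _
  · rw [show letterHeight (1, b) = if b then 1 else -1 from rfl]
    convert one_mem Uα using 1
    unfold x₂
    group

lemma ReadsFrom.x₂_zpow_mul_mk_mul_x₂_zpow_mem {s : ℤ} {L : List (Fin 2 × Bool)}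
    (h : ReadsFrom s L) : x₂ ^ s * mk L * x₂ ^ (-(s + height L)) ∈ Uα := by
  induction L generalizing s with
  | nil => simp [← one_eq_mk]
  | cons x L ih =>
    have hsplit : x₂ ^ s * mk (x :: L) * x₂ ^ (-(s + height (x :: L))) =
        (x₂ ^ s * mk [x] * x₂ ^ (-(s + letterHeight x))) *
          (x₂ ^ (s + letterHeight x) * mk L * x₂ ^ (-(s + letterHeight x + height L))) := by
      rw [height_cons, ← List.singleton_append, ← mul_mk]
      group
    rw [hsplit]
    exact mul_mem (x₂_zpow_mul_mk_singleton_mul_x₂_zpow_mem h.1 x) (ih h.2)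

def InDoubleCosets (a : FreeGroup (Fin 2)) : Prop :=
  ∃ u₁ ∈ Uα, ∃ u₂ ∈ Uα, ∃ ε ∈ ({-1, 0, 1} : Set ℤ), a = u₁ * x₂ ^ ε * u₂

def ConjInterNontrivial (a : FreeGroup (Fin 2)) : Prop :=
  ∃ c ∈ Uα, c ≠ 1 ∧ a * c * a⁻¹ ∈ Uα

section Invariance

variable {a u : FreeGroup (Fin 2)}

lemma inDoubleCosets_one : InDoubleCosets 1 :=
  ⟨1, one_mem _, 1, one_mem _, 0, by simp, by simp⟩

lemma InDoubleCosets.inv (h : InDoubleCosets a) : InDoubleCosets a⁻¹ := by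
  obtain ⟨u₁, hu₁, u₂, hu₂, ε, hε, rfl⟩ := h
  refine ⟨u₂⁻¹, inv_mem hu₂, u₁⁻¹, inv_mem hu₁, -ε, ?_, by group⟩
  simp only [Set.mem_insert_iff, Set.mem_singleton_iff] at hε ⊢
  omega

lemma InDoubleCosets.mul_left (hu : u ∈ Uα) (h : InDoubleCosets a) : InDoubleCosets (u * a) := by
  obtain ⟨u₁, hu₁, u₂, hu₂, ε, hε, rfl⟩ := h
  exact ⟨u * u₁, mul_mem hu hu₁, u₂, hu₂, ε, hε, by group⟩

lemma ReadsFrom.inDoubleCosets (h : ReadsFrom 0 a.toWord) : InDoubleCosets a := by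
  have hu := h.x₂_zpow_mul_mk_mul_x₂_zpow_mem
  have hε := h.add_height_mem_Icc
  rw [mk_toWord, zero_add, zpow_zero, one_mul] at hu
  rw [zero_add] at hε
  refine ⟨_, hu, 1, one_mem _, height a.toWord, ?_, by group⟩
  simp only [Set.mem_Icc] at hε
  simp only [Set.mem_insert_iff, Set.mem_singleton_iff]
  omega

lemma ConjInterNontrivial.inv (h : ConjInterNontrivial a) : ConjInterNontrivial a⁻¹ := by
  obtain ⟨c, hc, hc1, hac⟩ := h
  exact ⟨a * c * a⁻¹, hac, conj_eq_one_iff.not.2 hc1, by simpa [mul_assoc] using hc⟩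

lemma ConjInterNontrivial.mul_left (hu : u ∈ Uα) (h : ConjInterNontrivial a) :
    ConjInterNontrivial (u * a) := by
  obtain ⟨c, hc, hc1, hac⟩ := h
  refine ⟨c, hc, hc1, ?_⟩
  simpa [mul_assoc] using mul_mem (mul_mem hu hac) (inv_mem hu)

lemma conjInterNontrivial_x₂ : ConjInterNontrivial x₂ :=
  ⟨x₁, x₁_mem, of_ne_one 0, x₂_mul_x₁_mul_x₂_inv_mem⟩

lemma InDoubleCosets.conjInterNontrivial (h : InDoubleCosets a) : ConjInterNontrivial a := by
  obtain ⟨u₁, hu₁, u₂, hu₂, ε, hε, rfl⟩ := h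
  have hx₂ : ConjInterNontrivial (x₂ ^ ε) := by
    rcases hε with rfl | rfl | rfl
    · simpa using conjInterNontrivial_x₂.inv
    · exact ⟨x₁, x₁_mem, of_ne_one 0, by simpa using x₁_mem⟩
    · simpa using conjInterNontrivial_x₂
  simpa [mul_assoc] using ((hx₂.mul_left hu₁).inv.mul_left (inv_mem hu₂)).inv

end Invariance

noncomputable def invX₂ : FreeGroup (Fin 2) →* FreeGroup (Fin 2) := lift ![x₁, x₂⁻¹]

noncomputable def reflect : FreeGroup (Fin 2) →* FreeGroup (Fin 2) :=
  (MulAut.conj x₂).toMonoidHom.comp invX₂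

lemma reflect_apply (g : FreeGroup (Fin 2)) : reflect g = x₂ * invX₂ g * x₂⁻¹ := rfl

lemma reflect_x₁ : reflect x₁ = x₂ * x₁ * x₂⁻¹ := by
  simp [reflect_apply, invX₂, x₁]

lemma reflect_x₂ : reflect x₂ = x₂⁻¹ := by
  simp [reflect_apply, invX₂, x₂]

lemma reflect_reflect (g : FreeGroup (Fin 2)) : reflect (reflect g) = g := by
  suffices h : reflect.comp reflect = MonoidHom.id _ from DFunLike.congr_fun h g
  refine ext_hom _ _ fun i => ?_
  obtain rfl | rfl : i = 0 ∨ i = 1 := by omega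
  · change reflect (reflect x₁) = x₁
    simp only [_root_.map_mul, _root_.map_inv, reflect_x₁, reflect_x₂, inv_inv]
    group
  · change reflect (reflect x₂) = x₂
    simp [reflect_x₂]

lemma reflect_mem {g : FreeGroup (Fin 2)} (hg : g ∈ Uα) : reflect g ∈ Uα := by
  induction hg using Subgroup.closure_induction with
  | mem g hg =>
    rcases hg with rfl | rfl
    · rw [reflect_x₁]; exact x₂_mul_x₁_mul_x₂_inv_mem
    · simpa [reflect_x₁, reflect_x₂] using inv_mem x₁_mem
  | one => simp
  | mul g h _ _ hg hh => simpa using mul_mem hg hh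
  | inv g _ hg => simpa using inv_mem hg

lemma norm_reflect_x₂_mul_mk_mul_x₂_inv_le (m : List (Fin 2 × Bool)) :
    (reflect (x₂ * mk m * x₂⁻¹)).norm ≤ m.length := by
  have h : reflect (x₂ * mk m * x₂⁻¹) = invX₂ (mk m) := by
    simp only [_root_.map_mul, _root_.map_inv, reflect_x₂, inv_inv, reflect_apply (mk m)]
    group
  rw [h]
  refine (norm_lift_le (fun i => ?_) _).trans norm_mk_le
  obtain rfl | rfl : i = 0 ∨ i = 1 := by omega
  · show x₁.norm ≤ 1
    simp [x₁, norm_of]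
  · show (x₂⁻¹).norm ≤ 1
    simp [x₂, norm_inv_eq, norm_of]

lemma norm_reflect_lt {a : FreeGroup (Fin 2)} {t t' : List (Fin 2 × Bool)}
    (h : a.toWord = (1, true) :: t) (h' : a⁻¹.toWord = (1, true) :: t') :
    (reflect a).norm < a.norm := by
  have hlast : ((1, true) :: t).getLast? = some (1, false) := by
    rw [← h]
    exact getLast?_toWord_of_head?_toWord_inv (b := true) (by rw [h']; rfl)
  obtain ⟨w, hw⟩ := List.getLast?_eq_some_iff.1 hlast
  rcases w with _ | ⟨y, m⟩
  · simp at hw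
  · obtain ⟨rfl, rfl⟩ : (1, true) = y ∧ t = m ++ [(1, false)] := by simpa using hw
    have hx₂ : x₂⁻¹ = mk [(1, false)] := by simp [mk_singleton, x₂]
    have ha : a = x₂ * mk m * x₂⁻¹ := by
      rw [hx₂, x₂, of, mul_mk, mul_mk, ← mk_toWord (x := a), h]
      rfl
    calc (reflect a).norm ≤ m.length := ha ▸ norm_reflect_x₂_mul_mk_mul_x₂_inv_le m
      _ < a.norm := by simp [FreeGroup.norm, h]

lemma InDoubleCosets.map_reflect {a : FreeGroup (Fin 2)} (h : InDoubleCosets a) :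
    InDoubleCosets (reflect a) := by
  obtain ⟨u₁, hu₁, u₂, hu₂, ε, hε, rfl⟩ := h
  refine ⟨reflect u₁, reflect_mem hu₁, reflect u₂, reflect_mem hu₂, -ε, ?_, ?_⟩
  · simp only [Set.mem_insert_iff, Set.mem_singleton_iff] at hε ⊢
    omega
  · simp [reflect_x₂, zpow_neg]

lemma ConjInterNontrivial.map_reflect {a : FreeGroup (Fin 2)} (h : ConjInterNontrivial a) :
    ConjInterNontrivial (reflect a) := by
  obtain ⟨c, hc, hc1, hac⟩ := h
  refine ⟨reflect c, reflect_mem hc, ?_, by simpa using reflect_mem hac⟩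
  intro h1
  exact hc1 (by simpa [reflect_reflect] using congrArg reflect h1)

lemma inDoubleCosets_of_getLast? {a : FreeGroup (Fin 2)} (h : ConjInterNontrivial a)
    (hlast : a.toWord.getLast? = some (1, true)) : InDoubleCosets a := by
  obtain ⟨c, hc, hc1, hac⟩ := h
  have hv := isLoop_toWord_of_mem hc
  have hhead : a⁻¹.toWord.head? = some (1, false) := by
    obtain ⟨w, hw⟩ := List.getLast?_eq_some_iff.1 hlast
    rw [toWord_inv, hw, invRev_append]
    rfl
  have hred : IsReduced (a.toWord ++ c.toWord ++ a⁻¹.toWord) := by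
    refine IsReduced.append_overlap ?_ ?_ (mt toWord_eq_nil_iff.1 hc1)
    · refine isReduced_append isReduced_toWord isReduced_toWord fun x hx y hy => ?_
      rw [hlast, Option.mem_some_iff] at hx
      subst hx
      rintro rfl
      exact hv.head?_ne hy
    · refine isReduced_append isReduced_toWord isReduced_toWord fun x hx y hy => ?_
      rw [hhead, Option.mem_some_iff] at hy
      subst hy
      intro hxy
      have hx₂ : x = (1, true) := by
        obtain ⟨i, b⟩ := x
        cases b <;> simp_all
      exact hv.getLast?_ne (hx₂ ▸ hx)
  have hword : (a * c * a⁻¹).toWord = a.toWord ++ c.toWord ++ a⁻¹.toWord := by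
    rw [← hred.reduce_eq, ← toWord_mk, ← mul_mk, ← mul_mk, mk_toWord, mk_toWord, mk_toWord]
  have hreads := (isLoop_toWord_of_mem hac).1
  rw [hword, List.append_assoc, readsFrom_append] at hreads
  exact hreads.1.inDoubleCosets

lemma head?_toWord_cases (g : FreeGroup (Fin 2)) :
    g = 1 ∨ g.toWord.head? = some (1, false) ∨ (∃ u ∈ Uα, (u * g).norm < g.norm) ∨
      ∃ t, g.toWord = (1, true) :: t := by
  rcases hw : g.toWord with _ | ⟨⟨i, b⟩, t⟩
  · exact Or.inl (toWord_eq_nil_iff.1 hw)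
  obtain rfl | rfl : i = 0 ∨ i = 1 := by omega
  · refine Or.inr (Or.inr (Or.inl ⟨(mk [(0, b)])⁻¹, inv_mem ?_, ?_⟩))
    · rw [mk_singleton]
      exact zpow_mem x₁_mem _
    · have hg : g = mk [(0, b)] * mk t := by rw [mul_mk, List.singleton_append, ← hw, mk_toWord]
      calc ((mk [(0, b)])⁻¹ * g).norm = (mk t).norm := by rw [hg, inv_mul_cancel_left]
        _ ≤ t.length := norm_mk_le
        _ < g.norm := by simp [FreeGroup.norm, hw]
  · cases b
    · exact Or.inr (Or.inl rfl)
    · exact Or.inr (Or.inr (Or.inr ⟨t, rfl⟩))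

theorem inDoubleCosets_of_conjInterNontrivial (a : FreeGroup (Fin 2))
    (h : ConjInterNontrivial a) : InDoubleCosets a := by
  induction hn : a.norm using Nat.strong_induction_on generalizing a with
  | _ n ih =>
  subst hn
  have ih' (b : FreeGroup (Fin 2)) (hb : b.norm < a.norm) (hb' : ConjInterNontrivial b) :
      InDoubleCosets b := ih _ hb b hb' rfl
  rcases head?_toWord_cases a with rfl | hhead | ⟨u, hu, hlt⟩ | ⟨t, ht⟩
  · exact inDoubleCosets_one
  · simpa using (inDoubleCosets_of_getLast? h.inv
      (getLast?_toWord_of_head?_toWord_inv (a := a⁻¹) (by rwa [inv_inv]))).inv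
  · simpa using (ih' _ hlt (h.mul_left hu)).mul_left (inv_mem hu)
  rcases head?_toWord_cases a⁻¹ with hinv | hhead | ⟨u, hu, hlt⟩ | ⟨t', ht'⟩
  · rw [inv_eq_one.1 hinv]
    exact inDoubleCosets_one
  · exact inDoubleCosets_of_getLast? h (getLast?_toWord_of_head?_toWord_inv hhead)
  · rw [norm_inv_eq] at hlt
    simpa using ((ih' _ hlt (h.inv.mul_left hu)).mul_left (inv_mem hu)).inv
  · simpa [reflect_reflect] using (ih' _ (norm_reflect_lt ht ht') h.map_reflect).map_reflect

lemma map_conj_inf_ne_bot_iff (a : FreeGroup (Fin 2)) :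
    Subgroup.map (MulAut.conj a).toMonoidHom Uα ⊓ Uα ≠ ⊥ ↔ ConjInterNontrivial a := by
  simp only [ne_eq, Subgroup.eq_bot_iff_forall, Subgroup.mem_inf, Subgroup.mem_map, not_forall]
  constructor
  · rintro ⟨_, ⟨⟨c, hc, rfl⟩, hac⟩, hac1⟩
    exact ⟨c, hc, fun hc1 => hac1 (by simp [hc1]), hac⟩
  · rintro ⟨c, hc, hc1, hac⟩
    exact ⟨a * c * a⁻¹, ⟨⟨c, hc, rfl⟩, hac⟩, conj_eq_one_iff.not.2 hc1⟩

end Uα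

/-- `aU_αa⁻¹ ∩ U_α` is nontrivial iff `a = u₁·x₂^ε·u₂` with `u₁, u₂ ∈ U_α`, `ε ∈ {-1,0,1}`. -/
theorem conj_Ualpha_inter_Ualpha_nontrivial_iff (a : FreeGroup (Fin 2)) :
    Subgroup.map ((MulAut.conj a).toMonoidHom) Uα ⊓ Uα ≠ ⊥ ↔
      ∃ u₁ ∈ Uα, ∃ u₂ ∈ Uα, ∃ ε ∈ ({-1, 0, 1} : Set ℤ), a = u₁ * x₂ ^ ε * u₂ := by
  rw [Uα.map_conj_inf_ne_bot_iff]
  exact ⟨Uα.inDoubleCosets_of_conjInterNontrivial a, Uα.InDoubleCosets.conjInterNontrivial⟩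
end

section
/- Let F = F(x₁, x₂), m_V = x₂x₁⁻¹x₂⁻¹x₁, and U_α = ⟨x₁, x₂x₁⁻¹x₂⁻¹⟩. Then for any a ∈ F, the intersection a⟨m_V⟩a⁻¹ ∩ U_α is either trivial or equal to all of a⟨m_V⟩a⁻¹. -/
open FreeGroup

noncomputable def mV : FreeGroup (Fin 2) := x₂ * x₁⁻¹ * x₂⁻¹ * x₁

/-! The letter `n` of `FreeGroup ℤ` stands for `yₙ = x₂ⁿ x₁ x₂⁻ⁿ`, and `F₂ ≅ FreeGroup ℤ ⋊ ℤ`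
with `x₂` acting by shifting letters. In this model `Uα` becomes the free factor `A₀₁ = ⟨y₀, y₁⟩`
and `mV` becomes `y₁⁻¹ y₀`. Write `a = k x₂ʳ` and suppose `a mV^j a⁻¹ ∈ Uα` with `j ≠ 0`. The
homomorphism `yₙ ↦ n(n-1)` kills `A₀₁` but sends the conjugate to `-2rj`, so `r = 0`. Applying the
retraction of `FreeGroup ℤ` onto `A₀₁` shows that `(retract₀₁ k)⁻¹ k` commutes with `(y₁⁻¹ y₀)^j`
and is killed by the retraction, while `(y₁⁻¹ y₀)^j` is not; since commuting elements of a
free group are powers of a common element and free groups are torsion-free,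
`(retract₀₁ k)⁻¹ k = 1`. Hence `k ∈ A₀₁` and `a ∈ Uα`. -/

namespace FreeGroup

variable {α : Type*}

theorem not_commute_of_ne {a b : α} (h : a ≠ b) : ¬Commute (of a) (of b) := by
  classical
  intro hc
  let σ : α → Equiv.Perm (Fin 3) := fun x =>
    if x = a then Equiv.swap 0 1 else if x = b then Equiv.swap 1 2 else 1
  have hσ := congrArg (· 2) (hc.map (lift σ)).eq
  simp [σ, Ne.symm h, Equiv.swap_apply_of_ne_of_ne] at hσ

instance isCyclic_of_subsingleton [Subsingleton α] : IsCyclic (FreeGroup α) := by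
  cases isEmpty_or_nonempty α
  · infer_instance
  · have := uniqueOfSubsingleton (Classical.arbitrary α)
    infer_instance

open scoped IsMulCommutative in
theorem _root_.IsFreeGroup.isCyclic_of_isMulCommutative (G : Type*) [Group G] [IsFreeGroup G]
    [IsMulCommutative G] : IsCyclic G := by
  let e := IsFreeGroup.toFreeGroup G
  have : Subsingleton (IsFreeGroup.Generators G) := ⟨fun a b => by
    by_contra hab
    exact not_commute_of_ne hab <| by
      simpa using (Commute.all (e.symm (.of a)) (e.symm (.of b))).map e⟩
  exact isCyclic_of_surjective e.symm e.symm.surjective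

theorem exists_zpowers_of_commute {x y : FreeGroup α} (h : Commute x y) :
    ∃ z, x ∈ Subgroup.zpowers z ∧ y ∈ Subgroup.zpowers z := by
  let H := Subgroup.closure {x, y}
  have : IsMulCommutative H := Subgroup.isMulCommutative_closure <| by
    rintro a (rfl | rfl) b (rfl | rfl) <;> first | rfl | exact h.eq | exact h.eq.symm
  have := IsFreeGroup.isCyclic_of_isMulCommutative H
  obtain ⟨z, hz⟩ := IsCyclic.exists_zpow_surjective (G := H)
  obtain ⟨p, hp⟩ := hz ⟨x, Subgroup.subset_closure (by simp)⟩
  obtain ⟨q, hq⟩ := hz ⟨y, Subgroup.subset_closure (by simp)⟩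
  exact ⟨z, ⟨p, congrArg Subtype.val hp⟩, ⟨q, congrArg Subtype.val hq⟩⟩

theorem eq_one_of_commute_of_map_eq_one {H : Type*} [Group H] [IsMulTorsionFree H]
    (π : FreeGroup α →* H) {c w : FreeGroup α} (hcw : Commute c w) (hc : π c = 1) (hw : π w ≠ 1) :
    c = 1 := by
  obtain ⟨z, ⟨p, rfl⟩, ⟨q, rfl⟩⟩ := exists_zpowers_of_commute hcw
  simp only [map_zpow] at hc hw
  have hz : π z ≠ 1 := by rintro h; simp [h] at hw
  simp [(IsMulTorsionFree.zpow_eq_one_iff_right hz).1 hc]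

theorem map_eq_self_of_map_conj_eq_self {π : FreeGroup α →* FreeGroup α}
    (hπ : ∀ g, π (π g) = π g) {k w : FreeGroup α} (hw : π w = w) (hw1 : w ≠ 1)
    (hkw : π (k * w * k⁻¹) = k * w * k⁻¹) : π k = k := by
  have hcomm : Commute ((π k)⁻¹ * k) w := by
    simp only [_root_.map_mul, _root_.map_inv, hw] at hkw
    calc (π k)⁻¹ * k * w = (π k)⁻¹ * (k * w * k⁻¹) * k := by group
      _ = w * ((π k)⁻¹ * k) := by rw [← hkw]; group
  have := eq_one_of_commute_of_map_eq_one π hcomm (by simp [hπ]) (by rwa [hw])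
  exact inv_mul_eq_one.1 this

end FreeGroup

open SemidirectProduct

noncomputable def shiftAut : Multiplicative ℤ →* MulAut (FreeGroup ℤ) :=
  MonoidHom.mk' (fun r => freeGroupCongr (Equiv.addRight r.toAdd)) fun r s => by
    apply MulEquiv.toMonoidHom_injective
    ext n
    simp [add_assoc, add_comm (Multiplicative.toAdd s)]

@[simp] lemma shiftAut_of (r : Multiplicative ℤ) (n : ℤ) :
    shiftAut r (of n) = of (n + r.toAdd) := by
  simp [shiftAut]

abbrev F₂Split := FreeGroup ℤ ⋊[shiftAut] Multiplicative ℤ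

noncomputable def toSplit : FreeGroup (Fin 2) →* F₂Split :=
  FreeGroup.lift ![inl (of 0), inr (.ofAdd 1)]

noncomputable def ofSplit : F₂Split →* FreeGroup (Fin 2) :=
  SemidirectProduct.lift (FreeGroup.lift fun n => x₂ ^ n * x₁ * x₂ ^ (-n)) (zpowersHom _ x₂)
    fun r => by
      ext n
      simp only [MonoidHom.comp_apply, MulEquiv.coe_toMonoidHom, shiftAut_of, lift_apply_of,
        zpowersHom_apply, MulAut.conj_apply]
      group

lemma ofSplit_toSplit (w : FreeGroup (Fin 2)) : ofSplit (toSplit w) = w := by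
  suffices ofSplit.comp toSplit = MonoidHom.id _ from DFunLike.congr_fun this w
  ext i
  fin_cases i <;> simp [toSplit, ofSplit, x₁, x₂]

lemma toSplit_injective : Function.Injective toSplit :=
  Function.LeftInverse.injective ofSplit_toSplit

lemma toSplit_x₁ : toSplit x₁ = inl (of 0) := by simp [toSplit, x₁]

lemma toSplit_x₂ : toSplit x₂ = inr (.ofAdd 1) := by simp [toSplit, x₂]

lemma inr_mul_inl_mul_inr_inv (r : Multiplicative ℤ) (n : FreeGroup ℤ) :
    (inr r : F₂Split) * inl n * (inr r)⁻¹ = inl (shiftAut r n) := by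
  rw [inl_aut, _root_.map_inv]

lemma toSplit_x₂_x₁_inv_x₂_inv : toSplit (x₂ * x₁⁻¹ * x₂⁻¹) = inl (of 1)⁻¹ := by
  rw [_root_.map_mul, _root_.map_mul, _root_.map_inv, _root_.map_inv, toSplit_x₁, toSplit_x₂,
    ← _root_.map_inv inl, inr_mul_inl_mul_inr_inv]
  simp

lemma conj_inl (k n : FreeGroup ℤ) (r : Multiplicative ℤ) :
    (inl k * inr r : F₂Split) * inl n * (inl k * inr r)⁻¹ = inl (k * shiftAut r n * k⁻¹) := by
  rw [_root_.map_mul, _root_.map_mul, _root_.map_inv, ← inr_mul_inl_mul_inr_inv]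
  group

noncomputable def A₀₁ : Subgroup (FreeGroup ℤ) := Subgroup.closure {of 0, (of 1)⁻¹}

lemma map_toSplit_Uα : Uα.map toSplit = A₀₁.map (inl : FreeGroup ℤ →* F₂Split) := by
  rw [Uα, A₀₁, MonoidHom.map_closure, MonoidHom.map_closure, Set.image_pair, Set.image_pair,
    toSplit_x₂_x₁_inv_x₂_inv, toSplit_x₁]

lemma mem_Uα_iff (w : FreeGroup (Fin 2)) : w ∈ Uα ↔ ∃ k ∈ A₀₁, inl k = toSplit w := by
  rw [← Subgroup.mem_map_iff_mem toSplit_injective, map_toSplit_Uα]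
  rfl

noncomputable def mV' : FreeGroup ℤ := (of 1)⁻¹ * of 0

lemma toSplit_mV : toSplit mV = inl mV' := by
  rw [mV, _root_.map_mul, toSplit_x₂_x₁_inv_x₂_inv, toSplit_x₁, mV', _root_.map_mul]

noncomputable def retract₀₁ : FreeGroup ℤ →* FreeGroup ℤ :=
  FreeGroup.lift fun n => if n = 0 ∨ n = 1 then of n else 1

lemma retract₀₁_mem (k : FreeGroup ℤ) : retract₀₁ k ∈ A₀₁ := by
  refine FreeGroup.range_lift_le ?_ ⟨k, rfl⟩
  rintro _ ⟨n, rfl⟩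
  dsimp only
  split_ifs with hn
  · rcases hn with rfl | rfl
    · exact Subgroup.subset_closure (by simp)
    · exact inv_mem_iff.1 (Subgroup.subset_closure (by simp))
  · exact one_mem A₀₁

lemma retract₀₁_eq_self {k : FreeGroup ℤ} (hk : k ∈ A₀₁) : retract₀₁ k = k := by
  suffices A₀₁ ≤ MonoidHom.eqLocus retract₀₁ (MonoidHom.id _) from this hk
  rw [A₀₁, Subgroup.closure_le]
  rintro _ (rfl | rfl) <;> change retract₀₁ _ = _ <;> simp [retract₀₁]

noncomputable def χ : FreeGroup ℤ →* Multiplicative ℤ :=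
  FreeGroup.lift fun n => .ofAdd (n * (n - 1))

@[simp] lemma χ_of (n : ℤ) : χ (of n) = .ofAdd (n * (n - 1)) := FreeGroup.lift_apply_of

lemma χ_eq_one {k : FreeGroup ℤ} (hk : k ∈ A₀₁) : χ k = 1 := by
  suffices A₀₁ ≤ χ.ker from this hk
  rw [A₀₁, Subgroup.closure_le]
  rintro _ (rfl | rfl) <;> simp

lemma χ_shiftAut_mV' (r : Multiplicative ℤ) : χ (shiftAut r mV') = .ofAdd (-2 * r.toAdd) := by
  simp only [mV', _root_.map_mul, _root_.map_inv, shiftAut_of, χ_of, ← ofAdd_neg, ← ofAdd_add]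
  ring_nf

lemma mV'_mem : mV' ∈ A₀₁ :=
  mul_mem (Subgroup.subset_closure (by simp)) (Subgroup.subset_closure (by simp))

lemma mV'_ne_one : mV' ≠ 1 := by
  simp [mV', inv_mul_eq_one, FreeGroup.of_injective.eq_iff]

lemma mem_Uα_of_conj_zpow_mV_mem {a : FreeGroup (Fin 2)} {j : ℤ} (hj : j ≠ 0)
    (h : a * mV ^ j * a⁻¹ ∈ Uα) : a ∈ Uα := by
  set k := (toSplit a).left
  set r := (toSplit a).right
  have ha : toSplit a = inl k * inr r := (inl_left_mul_inr_right _).symm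
  obtain ⟨k₀, hk₀, hk₀_eq⟩ := (mem_Uα_iff _).1 h
  rw [_root_.map_mul, _root_.map_mul, _root_.map_inv, _root_.map_zpow, toSplit_mV,
    ← _root_.map_zpow, ha, conj_inl] at hk₀_eq
  have hconj : k * (shiftAut r mV') ^ j * k⁻¹ ∈ A₀₁ := by
    rw [← _root_.map_zpow, ← inl_injective hk₀_eq]
    exact hk₀
  have hr : r = 1 := by simpa [χ_shiftAut_mV', hj] using χ_eq_one hconj
  rw [hr, _root_.map_one, MulAut.one_apply] at hconj
  have hk : retract₀₁ k = k :=
    FreeGroup.map_eq_self_of_map_conj_eq_self (fun g => retract₀₁_eq_self (retract₀₁_mem g))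
      (by rw [_root_.map_zpow, retract₀₁_eq_self mV'_mem])
      ((IsMulTorsionFree.zpow_eq_one_iff_left hj).not.2 mV'_ne_one) (retract₀₁_eq_self hconj)
  exact (mem_Uα_iff a).2 ⟨k, hk ▸ retract₀₁_mem k, by rw [ha, hr, _root_.map_one, mul_one]⟩

lemma mV_mem : mV ∈ Uα :=
  mul_mem (Subgroup.subset_closure (by simp)) (Subgroup.subset_closure (by simp))

/-- For any `a`, the intersection `a⟨m_V⟩a⁻¹ ∩ U_α` is either trivial or all of `a⟨m_V⟩a⁻¹`. -/
theorem conj_zpowers_mV_inter_Ualpha_dichotomy (a : FreeGroup (Fin 2)) :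
    Subgroup.map ((MulAut.conj a).toMonoidHom) (Subgroup.zpowers mV) ⊓ Uα = ⊥ ∨
      Subgroup.map ((MulAut.conj a).toMonoidHom) (Subgroup.zpowers mV) ≤ Uα := by
  by_cases ha : a ∈ Uα
  · right
    rw [Subgroup.map_le_iff_le_comap, Subgroup.zpowers_le]
    exact (mul_mem (mul_mem ha mV_mem) (inv_mem ha) : a * mV * a⁻¹ ∈ Uα)
  · left
    rw [eq_bot_iff]
    rintro _ ⟨⟨_, ⟨j, rfl⟩, rfl⟩, hj⟩
    obtain rfl : j = 0 := by
      by_contra hj0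
      exact ha (mem_Uα_of_conj_zpow_mV_mem hj0 hj)
    simp
end
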